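/- arXiv:2401.05361 — 7 statements merged into one kernel-verified Lean document; each statement's English description precedes it below -/
import Mathlib

section
/- If s ≥ 1 is an integer, T > (4s²)^s, and T > z/(log z)^s for a real number z > 1, then z < 2^s · T · (log T)^s. -/
set_option maxHeartbeats 1000000

lemma log_le_div_e' {x : ℝ} (hx : 0 < x) : Real.log x ≤ x / Real.exp 1 := by
  have h := Real.add_one_le_exp (Real.log x - 1)
  rw [Real.exp_sub, Real.exp_log hx] at h
  linarith

/-- Guzmán–Luca analytic lemma: if `s ≥ 1`, `T > (4s²)^s` and
`T > z / (log z)^s`, then `z < 2^s · T · (log T)^s`. -/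
theorem guzman_luca (s : ℕ) (T z : ℝ) (hs : 1 ≤ s) (hz : 1 < z)
    (hT : ((4 * s ^ 2 : ℕ) : ℝ) ^ s < T)
    (hTz : z / (Real.log z) ^ s < T) :
    z < 2 ^ s * T * (Real.log T) ^ s := by
  have hs1 : (1:ℝ) ≤ (s:ℝ) := by exact_mod_cast hs
  set u := Real.log z with hu
  set L := Real.log T with hL
  have hz0 : (0:ℝ) < z := lt_trans one_pos hz
  have hu0 : 0 < u := Real.log_pos hz
  have hbase : (1:ℝ) ≤ ((4 * s ^ 2 : ℕ) : ℝ) := by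
    have : 1 ≤ 4 * s ^ 2 := by nlinarith
    exact_mod_cast this
  have hT1 : (1:ℝ) < T := lt_of_le_of_lt (one_le_pow₀ hbase) hT
  have hL0 : 0 < L := Real.log_pos hT1
  have hT0 : (0:ℝ) < T := lt_trans one_pos hT1
  have hus : (0:ℝ) < u ^ s := by positivity
  have hzT : z < T * u ^ s := by
    have := (div_lt_iff₀ hus).mp hTz
    linarith
  have hLs : (s:ℝ) * Real.log (4 * (s:ℝ)^2) < L := by
    have h1 : Real.log (((4 * s ^ 2 : ℕ) : ℝ) ^ s) < L := by
      exact Real.log_lt_log (by positivity) hT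
    rw [Real.log_pow] at h1
    have : ((4 * s ^ 2 : ℕ) : ℝ) = 4 * (s:ℝ)^2 := by push_cast; ring
    rw [this] at h1
    exact h1
  have key : u < 2 * L := by
    by_contra hcon
    push_neg at hcon
    -- hcon : 2 * L ≤ u
    have hlog : u < L + s * Real.log u := by
      have h1 : Real.log z < Real.log (T * u ^ s) := Real.log_lt_log hz0 hzT
      rw [Real.log_mul (ne_of_gt hT0) (ne_of_gt hus), Real.log_pow] at h1
      exact h1
    have h2 : u < 2 * s * Real.log u := by
      have : L ≤ u / 2 := by linarith
      nlinarith
    have hs0 : (0:ℝ) < s := by linarith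
    -- u ≥ 2 s log(4 s²)
    have husl : 2 * (s:ℝ) * Real.log (4 * (s:ℝ)^2) < u := by nlinarith
    have hl4 : (0:ℝ) < Real.log (4 * (s:ℝ)^2) := by
      apply Real.log_pos; nlinarith
    -- log u > log (4 s²), hence u > 4 s²
    have hloggt : Real.log (4 * (s:ℝ)^2) < Real.log u := by
      have : Real.log (4 * (s:ℝ)^2) < u / (2 * s) := by
        rw [lt_div_iff₀ (by positivity)]
        nlinarith
      have h3 : u / (2 * s) < Real.log u := by
        rw [div_lt_iff₀ (by positivity)]
        nlinarith
      linarith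
    have hu4 : 4 * (s:ℝ)^2 < u := by
      have := (Real.log_lt_log_iff (by positivity) hu0).mp hloggt
      exact this
    -- log u ≤ 2 √u / e
    have hsq0 : 0 < Real.sqrt u := Real.sqrt_pos.mpr hu0
    have he0 : (0:ℝ) < Real.exp 1 := Real.exp_pos 1
    have hlogsq : Real.log u * Real.exp 1 ≤ 2 * Real.sqrt u := by
      have h4 := log_le_div_e' hsq0
      rw [Real.log_sqrt (le_of_lt hu0), div_le_div_iff₀ (by norm_num) he0] at h4
      linarith
    have he2 : (2:ℝ) ≤ Real.exp 1 := by
      have := Real.add_one_le_exp (1:ℝ)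
      linarith
    -- u < 4 s √u / e
    have h5 : u * Real.exp 1 < 4 * s * Real.sqrt u := by
      -- from h2 : u < 2 s log u and hlogsq : log u * e ≤ 2 √u
      have hlu0 : 0 < Real.log u := lt_trans hl4 hloggt
      nlinarith [mul_lt_mul_of_pos_right h2 he0, hlogsq, hs0]
    have hmul : Real.sqrt u * Real.sqrt u = u := Real.mul_self_sqrt (le_of_lt hu0)
    have h6 : Real.sqrt u * Real.exp 1 < 4 * s := by
      nlinarith [h5, hmul, hsq0]
    have h7 : u * (Real.exp 1 * Real.exp 1) < 16 * (s:ℝ)^2 := by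
      have h8 := mul_lt_mul'' h6 h6 (by positivity) (by positivity)
      nlinarith [h8, hmul]
    have hee : (4:ℝ) ≤ Real.exp 1 * Real.exp 1 := by nlinarith [he2]
    nlinarith [h7, hu4, hee, hu0]
  -- conclude
  have hpow : u ^ s < (2 * L) ^ s := by
    exact pow_lt_pow_left₀ key (le_of_lt hu0) (by omega)
  calc z < T * u ^ s := hzT
    _ < T * (2 * L) ^ s := by
        exact mul_lt_mul_of_pos_left hpow hT0
    _ = 2 ^ s * T * L ^ s := by rw [mul_pow]; ring
end

section
/- Suppose n > 1000, ℓ, m ≥ 1, d1 ∈ {1,…,9}, d2 ∈ {0,…,9}, d1 ≠ d2, and 9(α^n + β^n) = d1·10^{2ℓ+m} − (d1−d2)·10^{ℓ+m} + (d1−d2)·10^ℓ − d1, where α = (1+√5)/2 and β = (1−√5)/2. Then |9α^n − d1·10^{2ℓ+m}| < 28·10^{ℓ+m}. -/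
noncomputable def α : ℝ := (1 + Real.sqrt 5) / 2
noncomputable def β : ℝ := (1 - Real.sqrt 5) / 2

theorem key_estimate_one (n ℓ m : ℕ) (d1 d2 : ℤ)
    (hn : 1000 < n) (hℓ : 1 ≤ ℓ) (hm : 1 ≤ m)
    (hd1 : 1 ≤ d1) (hd1' : d1 ≤ 9) (hd2 : 0 ≤ d2) (hd2' : d2 ≤ 9)
    (hne : d1 ≠ d2)
    (heq : 9 * (α ^ n + β ^ n) =
      (d1 : ℝ) * 10 ^ (2 * ℓ + m) - (d1 - d2 : ℝ) * 10 ^ (ℓ + m)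
        + (d1 - d2 : ℝ) * 10 ^ ℓ - d1) :
    |9 * α ^ n - (d1 : ℝ) * 10 ^ (2 * ℓ + m)| < 28 * 10 ^ (ℓ + m) := by
  have hsq : Real.sqrt 5 ^ 2 = 5 := Real.sq_sqrt (by norm_num)
  have hnn : (0:ℝ) ≤ Real.sqrt 5 := Real.sqrt_nonneg 5
  have h5a : Real.sqrt 5 < 3 := by nlinarith
  have h5b : 1 < Real.sqrt 5 := by nlinarith
  have hb : |β| < 1 := by
    rw [abs_lt]; unfold β; constructor <;> nlinarith
  have hbn : -1 ≤ β ^ n ∧ β ^ n ≤ 1 := by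
    have : |β ^ n| ≤ 1 := by
      rw [abs_pow]; exact pow_le_one₀ (abs_nonneg _) hb.le
    exact abs_le.mp this
  have hd1R : (1:ℝ) ≤ (d1:ℝ) := by exact_mod_cast hd1
  have hd1R' : (d1:ℝ) ≤ 9 := by exact_mod_cast hd1'
  have hd2R : (0:ℝ) ≤ (d2:ℝ) := by exact_mod_cast hd2
  have hd2R' : (d2:ℝ) ≤ 9 := by exact_mod_cast hd2'
  set P : ℝ := 10 ^ (ℓ + m) with hP
  set Q : ℝ := (10:ℝ) ^ ℓ with hQ
  have hQ10 : (10:ℝ) ≤ Q := by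
    calc (10:ℝ) = 10 ^ 1 := by norm_num
    _ ≤ Q := pow_le_pow_right₀ (by norm_num) hℓ
  have hPQ : 10 * Q ≤ P := by
    have : P = Q * 10 ^ m := by rw [hP, hQ, pow_add]
    have hm10 : (10:ℝ) ≤ 10 ^ m := by
      calc (10:ℝ) = 10 ^ 1 := by norm_num
      _ ≤ 10 ^ m := pow_le_pow_right₀ (by norm_num) hm
    nlinarith
  have hP100 : (100:ℝ) ≤ P := by nlinarith
  have key : 9 * α ^ n - (d1:ℝ) * 10 ^ (2 * ℓ + m)
      = -(9 * β ^ n) - (d1 - d2 : ℝ) * P + (d1 - d2 : ℝ) * Q - d1 := by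
    linarith [heq]
  rw [key, abs_lt]
  constructor <;> nlinarith [hbn.1, hbn.2, mul_le_mul_of_nonneg_right hd1R' (by positivity : (0:ℝ) ≤ P), mul_le_mul_of_nonneg_right hd2R' (by positivity : (0:ℝ) ≤ P), mul_le_mul_of_nonneg_right hd1R' (by positivity : (0:ℝ) ≤ Q), mul_le_mul_of_nonneg_right hd2R' (by positivity : (0:ℝ) ≤ Q), mul_le_mul_of_nonneg_right hd1R (by positivity : (0:ℝ) ≤ P), mul_le_mul_of_nonneg_right hd2R (by positivity : (0:ℝ) ≤ Q), mul_le_mul_of_nonneg_right hd1R (by positivity : (0:ℝ) ≤ Q), mul_le_mul_of_nonneg_right hd2R (by positivity : (0:ℝ) ≤ P)]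
end

section
/- Suppose n > 1000, ℓ, m ≥ 1, d1 ∈ {1,…,9}, d2 ∈ {0,…,9}, d1 ≠ d2, and 9(α^n + β^n) = d1·10^{2ℓ+m} − (d1−d2)·10^{ℓ+m} + (d1−d2)·10^ℓ − d1, where α = (1+√5)/2 and β = (1−√5)/2. Then |(9/d1)·α^n·10^{−2ℓ−m} − 1| < 28·10^{−ℓ}. -/
theorem key_estimate_one' (n ℓ m : ℕ) (d1 d2 : ℤ)
    (hn : 1000 < n) (hℓ : 1 ≤ ℓ) (hm : 1 ≤ m)
    (hd1 : 1 ≤ d1) (hd1' : d1 ≤ 9) (hd2 : 0 ≤ d2) (hd2' : d2 ≤ 9)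
    (hne : d1 ≠ d2)
    (heq : 9 * (α ^ n + β ^ n) =
      (d1 : ℝ) * 10 ^ (2 * ℓ + m) - (d1 - d2 : ℝ) * 10 ^ (ℓ + m)
        + (d1 - d2 : ℝ) * 10 ^ ℓ - d1) :
    |(9 / (d1 : ℝ)) * α ^ n * (10 : ℝ) ^ (-(2 * (ℓ : ℤ)) - m) - 1|
      < 28 * (10 : ℝ) ^ (-(ℓ : ℤ)) := by
  have h5 : (Real.sqrt 5) ^ 2 = 5 := Real.sq_sqrt (by norm_num)
  have h5n : (0:ℝ) ≤ Real.sqrt 5 := Real.sqrt_nonneg 5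
  have hβabs : |β| < 1 := by
    rw [abs_lt]; unfold β; constructor <;> nlinarith
  have hβn : |β ^ n| ≤ 1 := by
    rw [abs_pow]; exact pow_le_one₀ (abs_nonneg _) hβabs.le
  set R : ℝ := 10 ^ ℓ with hR
  set Q : ℝ := 10 ^ (ℓ + m) with hQ
  have hRpos : (0:ℝ) < R := by positivity
  have hQpos : (0:ℝ) < Q := by positivity
  have hR10 : (10:ℝ) ≤ R := by
    calc (10:ℝ) = 10 ^ 1 := by norm_num
    _ ≤ 10 ^ ℓ := pow_le_pow_right₀ (by norm_num) hℓ
  have hQR : 10 * R ≤ Q := by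
    rw [hQ, hR]
    calc 10 * (10:ℝ) ^ ℓ = 10 ^ (ℓ + 1) := by ring
    _ ≤ 10 ^ (ℓ + m) := pow_le_pow_right₀ (by norm_num) (by omega)
  have hP : (10:ℝ) ^ (2 * ℓ + m) = Q * R := by
    rw [hQ, hR, ← pow_add]; ring_nf
  have hd1R : (1:ℝ) ≤ (d1:ℝ) := by exact_mod_cast hd1
  have hd1pos : (0:ℝ) < d1 := by linarith
  have hz1 : (10:ℝ) ^ (-(2 * (ℓ:ℤ)) - m) = (Q * R)⁻¹ := by
    rw [← hP, show -(2 * (ℓ:ℤ)) - m = -((2 * ℓ + m : ℕ) : ℤ) by push_cast; ring,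
      zpow_neg, zpow_natCast]
  have hz2 : (10:ℝ) ^ (-(ℓ:ℤ)) = R⁻¹ := by
    rw [hR, zpow_neg, zpow_natCast]
  rw [hz1, hz2]
  have heq' : 9 * α ^ n
      = (d1:ℝ) * (Q * R) - (((d1:ℝ) - d2) * Q - ((d1:ℝ) - d2) * R + d1 + 9 * β ^ n) := by
    rw [← hP]; push_cast at heq ⊢; linarith
  set N : ℝ := ((d1:ℝ) - d2) * Q - ((d1:ℝ) - d2) * R + (d1:ℝ) + 9 * β ^ n with hN
  have hexpr : 9 / (d1:ℝ) * α ^ n * (Q * R)⁻¹ - 1 = -N / ((d1:ℝ) * (Q * R)) := by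
    field_simp
    nlinarith [heq']
  rw [hexpr, abs_div, abs_of_pos (show (0:ℝ) < (d1:ℝ) * (Q * R) by positivity),
    div_lt_iff₀ (by positivity)]
  obtain ⟨hb1, hb2⟩ := abs_le.mp hβn
  have hd2R : (0:ℝ) ≤ (d2:ℝ) := by exact_mod_cast hd2
  have hd2R' : (d2:ℝ) ≤ 9 := by exact_mod_cast hd2'
  have hd1R' : (d1:ℝ) ≤ 9 := by exact_mod_cast hd1'
  have hdd1 : -9 ≤ (d1:ℝ) - d2 := by linarith
  have hdd2 : (d1:ℝ) - d2 ≤ 9 := by linarith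
  have hNab : |(-N)| ≤ 9 * Q + 9 * R + 9 + 9 := by
    rw [abs_neg, abs_le, hN]
    constructor <;>
      linarith [mul_le_mul_of_nonneg_right hdd2 hQpos.le,
        mul_le_mul_of_nonneg_right hdd1 hQpos.le,
        mul_le_mul_of_nonneg_right hdd2 hRpos.le,
        mul_le_mul_of_nonneg_right hdd1 hRpos.le, hb1, hb2]
  have hfin : 9 * Q + 9 * R + 9 + 9 < 28 * R⁻¹ * ((d1:ℝ) * (Q * R)) := by
    have : 28 * R⁻¹ * ((d1:ℝ) * (Q * R)) = 28 * (d1:ℝ) * Q := by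
      field_simp
    rw [this]
    nlinarith [mul_le_mul_of_nonneg_right hd1R hQpos.le]
  linarith [hNab, hfin]
end

section
/- Suppose n > 1000, ℓ, m ≥ 1, d1 ∈ {1,…,9}, d2 ∈ {0,…,9}, d1 ≠ d2, and 9(α^n + β^n) = d1·10^{2ℓ+m} − (d1−d2)·10^{ℓ+m} + (d1−d2)·10^ℓ − d1. Then |9α^n − (d1·10^ℓ − (d1−d2))·10^{ℓ+m}| < 19·10^ℓ, and consequently |(9/(d1·10^ℓ − (d1−d2)))·α^n·10^{−ℓ−m} − 1| < 19·10^{−m}. -/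
theorem key_estimate_two (n ℓ m : ℕ) (d1 d2 : ℤ)
    (hn : 1000 < n) (hℓ : 1 ≤ ℓ) (hm : 1 ≤ m)
    (hd1 : 1 ≤ d1) (hd1' : d1 ≤ 9) (hd2 : 0 ≤ d2) (hd2' : d2 ≤ 9)
    (hne : d1 ≠ d2)
    (heq : 9 * (α ^ n + β ^ n) =
      (d1 : ℝ) * 10 ^ (2 * ℓ + m) - (d1 - d2 : ℝ) * 10 ^ (ℓ + m)
        + (d1 - d2 : ℝ) * 10 ^ ℓ - d1) :
    |9 * α ^ n - ((d1 : ℝ) * 10 ^ ℓ - (d1 - d2 : ℝ)) * 10 ^ (ℓ + m)|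
        < 19 * 10 ^ ℓ ∧
    |(9 / ((d1 : ℝ) * 10 ^ ℓ - (d1 - d2 : ℝ))) * α ^ n
        * (10 : ℝ) ^ (-(ℓ : ℤ) - m) - 1| < 19 * (10 : ℝ) ^ (-(m : ℤ)) := by
  have hs5 : Real.sqrt 5 < 3 := by
    nlinarith [Real.sq_sqrt (by norm_num : (5:ℝ) ≥ 0), Real.sqrt_nonneg 5]
  have hs5' : (1:ℝ) < Real.sqrt 5 := by
    nlinarith [Real.sq_sqrt (by norm_num : (5:ℝ) ≥ 0), Real.sqrt_nonneg 5]
  have hβ : |β| < 1 := by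
    rw [abs_lt]; unfold β; constructor <;> nlinarith
  have hβn : |β ^ n| ≤ 1 := by
    rw [abs_pow]; exact pow_le_one₀ (abs_nonneg _) hβ.le
  have hb := abs_le.mp hβn
  have h10 : (10:ℝ) ≤ 10 ^ ℓ := by
    calc (10:ℝ) = 10 ^ 1 := (pow_one _).symm
    _ ≤ 10 ^ ℓ := pow_le_pow_right₀ (by norm_num) hℓ
  have h10m : (10:ℝ) ≤ 10 ^ m := by
    calc (10:ℝ) = 10 ^ 1 := (pow_one _).symm
    _ ≤ 10 ^ m := pow_le_pow_right₀ (by norm_num) hm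
  have hd1R : (1:ℝ) ≤ (d1:ℝ) := by exact_mod_cast hd1
  have hd1R' : (d1:ℝ) ≤ 9 := by exact_mod_cast hd1'
  have hd2R : (0:ℝ) ≤ (d2:ℝ) := by exact_mod_cast hd2
  have hd2R' : (d2:ℝ) ≤ 9 := by exact_mod_cast hd2'
  have key : 9 * α ^ n - ((d1 : ℝ) * 10 ^ ℓ - (d1 - d2 : ℝ)) * 10 ^ (ℓ + m)
      = (d1 - d2 : ℝ) * 10 ^ ℓ - d1 - 9 * β ^ n := by
    linear_combination heq
  have part1 : |9 * α ^ n - ((d1 : ℝ) * 10 ^ ℓ - (d1 - d2 : ℝ)) * 10 ^ (ℓ + m)|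
      < 19 * 10 ^ ℓ := by
    rw [key, abs_lt]
    constructor <;> nlinarith
  refine ⟨part1, ?_⟩
  set D : ℝ := (d1 : ℝ) * 10 ^ ℓ - (d1 - d2 : ℝ) with hDdef
  have hD : 1 ≤ D := by
    have : (10:ℝ) ≤ (d1:ℝ) * 10 ^ ℓ := by nlinarith
    simp only [hDdef]; nlinarith
  have hP : (0:ℝ) < 10 ^ (ℓ + m) := by positivity
  have hz : (10:ℝ) ^ (-(ℓ:ℤ) - m) = ((10:ℝ) ^ (ℓ + m))⁻¹ := by
    rw [show -(ℓ:ℤ) - m = -((ℓ + m : ℕ) : ℤ) by push_cast; ring, zpow_neg, zpow_natCast]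
  have hz2 : (19:ℝ) * (10:ℝ) ^ (-(m:ℤ)) = 19 * 10 ^ ℓ / 10 ^ (ℓ + m) := by
    rw [zpow_neg, zpow_natCast, pow_add]
    field_simp
  have hrw : 9 / D * α ^ n * (10:ℝ) ^ (-(ℓ:ℤ) - m) - 1
      = (9 * α ^ n - D * 10 ^ (ℓ + m)) / (D * 10 ^ (ℓ + m)) := by
    rw [hz]
    field_simp
  have hDP : (0:ℝ) < D * 10 ^ (ℓ + m) := mul_pos (by linarith) hP
  rw [hrw, hz2, abs_div, abs_of_pos hDP, div_lt_div_iff₀ hDP hP]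
  calc |9 * α ^ n - D * 10 ^ (ℓ + m)| * 10 ^ (ℓ + m)
      < 19 * 10 ^ ℓ * 10 ^ (ℓ + m) := mul_lt_mul_of_pos_right part1 hP
    _ ≤ 19 * 10 ^ ℓ * (D * 10 ^ (ℓ + m)) := by
        apply mul_le_mul_of_nonneg_left (le_mul_of_one_le_left hP.le hD) (by positivity)
end

section
/- Suppose n > 1000, ℓ, m ≥ 1, d1 ∈ {1,…,9}, d2 ∈ {0,…,9}, d1 ≠ d2, and 9(α^n + β^n) = d1·10^{2ℓ+m} − (d1−d2)·10^{ℓ+m} + (d1−d2)·10^ℓ − d1. Then |9α^n − (d1·10^{ℓ+m} − (d1−d2)·10^m + (d1−d2))·10^ℓ| < 10, and consequently |((d1·10^{ℓ+m} − (d1−d2)·10^m + (d1−d2))/9)·α^{−n}·10^ℓ − 1| < 10/(9α^n). -/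
open Real goldenRatio

lemma α_eq_goldenRatio : α = φ := rfl

lemma β_eq_goldenConj : β = ψ := rfl

lemma one_lt_α : 1 < α := one_lt_goldenRatio

lemma α_pos : 0 < α := zero_lt_one.trans one_lt_α

lemma abs_β : |β| = α⁻¹ := by
  rw [α_eq_goldenRatio, β_eq_goldenConj, inv_goldenRatio, abs_of_neg goldenConj_neg]

lemma nine_lt_α_pow {n : ℕ} (hn : 6 ≤ n) : 9 < α ^ n := by
  have hα6 : α ^ 6 = 8 * α + 5 := by
    have := goldenRatio_mul_fib_succ_add_fib 5
    norm_num [Nat.fib_add_two] at this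
    rw [α_eq_goldenRatio, ← this]
    ring
  calc (9 : ℝ) < α ^ 6 := by rw [hα6]; linarith [one_lt_α]
    _ ≤ α ^ n := pow_le_pow_right₀ one_lt_α.le hn

lemma nine_mul_abs_β_pow_lt_one {n : ℕ} (hn : 6 ≤ n) : 9 * |β ^ n| < 1 := by
  rw [abs_pow, abs_β, inv_pow, ← div_eq_mul_inv, div_lt_one (pow_pos α_pos n)]
  exact nine_lt_α_pow hn

lemma nine_mul_sub_digits_eq {a b d₁ d₂ : ℝ} {ℓ m : ℕ}
    (h : 9 * (a + b) = d₁ * 10 ^ (2 * ℓ + m) - (d₁ - d₂) * 10 ^ (ℓ + m)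
      + (d₁ - d₂) * 10 ^ ℓ - d₁) :
    9 * a - (d₁ * 10 ^ (ℓ + m) - (d₁ - d₂) * 10 ^ m + (d₁ - d₂)) * 10 ^ ℓ
      = -(9 * b + d₁) := by
  rw [show 2 * ℓ + m = (ℓ + m) + ℓ by ring, pow_add, pow_add] at h
  rw [pow_add]
  linear_combination h

lemma abs_div_sub_one_lt_of_abs_sub_lt {a b c : ℝ} (ha : 0 < a) (h : |a - b| < c) :
    |b / a - 1| < c / a := by
  rwa [div_sub_one ha.ne', abs_div, abs_of_pos ha, abs_sub_comm, div_lt_div_iff_of_pos_right ha]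

theorem key_estimate_three_general (n ℓ m : ℕ) (d1 d2 : ℤ)
    (hn : 1000 < n)
    (hd1 : 1 ≤ d1) (hd1' : d1 ≤ 9)
    (heq : 9 * (α ^ n + β ^ n) =
      (d1 : ℝ) * 10 ^ (2 * ℓ + m) - (d1 - d2 : ℝ) * 10 ^ (ℓ + m)
        + (d1 - d2 : ℝ) * 10 ^ ℓ - d1) :
    |9 * α ^ n - ((d1 : ℝ) * 10 ^ (ℓ + m) - (d1 - d2 : ℝ) * 10 ^ m
        + (d1 - d2 : ℝ)) * 10 ^ ℓ| < 10 ∧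
    |(((d1 : ℝ) * 10 ^ (ℓ + m) - (d1 - d2 : ℝ) * 10 ^ m + (d1 - d2 : ℝ)) / 9)
        * α ^ (-(n : ℤ)) * 10 ^ ℓ - 1| < 10 / (9 * α ^ n) := by
  have hd1R : |(d1 : ℝ)| ≤ 9 :=
    abs_le.mpr ⟨by exact_mod_cast (by omega : -9 ≤ d1), by exact_mod_cast hd1'⟩
  have hdiff : |9 * α ^ n - ((d1 : ℝ) * 10 ^ (ℓ + m) - (d1 - d2 : ℝ) * 10 ^ m
      + (d1 - d2 : ℝ)) * 10 ^ ℓ| < 10 := by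
    rw [nine_mul_sub_digits_eq heq, abs_neg]
    calc |9 * β ^ n + d1| ≤ 9 * |β ^ n| + |(d1 : ℝ)| := by
          simpa only [abs_mul, abs_of_pos (by norm_num : (0 : ℝ) < 9)]
            using abs_add_le (9 * β ^ n) (d1 : ℝ)
      _ < 1 + 9 := add_lt_add_of_lt_of_le (nine_mul_abs_β_pow_lt_one (by omega)) hd1R
      _ = 10 := by norm_num
  refine ⟨hdiff, ?_⟩
  have hpos : 0 < 9 * α ^ n := mul_pos (by norm_num) (pow_pos α_pos n)
  convert abs_div_sub_one_lt_of_abs_sub_lt hpos hdiff using 3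
  rw [zpow_neg, zpow_natCast]
  field_simp

theorem key_estimate_three (n ℓ m : ℕ) (d1 d2 : ℤ)
    (hn : 1000 < n) (hℓ : 1 ≤ ℓ) (hm : 1 ≤ m)
    (hd1 : 1 ≤ d1) (hd1' : d1 ≤ 9) (hd2 : 0 ≤ d2) (hd2' : d2 ≤ 9)
    (hne : d1 ≠ d2)
    (heq : 9 * (α ^ n + β ^ n) =
      (d1 : ℝ) * 10 ^ (2 * ℓ + m) - (d1 - d2 : ℝ) * 10 ^ (ℓ + m)
        + (d1 - d2 : ℝ) * 10 ^ ℓ - d1) :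
    |9 * α ^ n - ((d1 : ℝ) * 10 ^ (ℓ + m) - (d1 - d2 : ℝ) * 10 ^ m
        + (d1 - d2 : ℝ)) * 10 ^ ℓ| < 10 ∧
    |(((d1 : ℝ) * 10 ^ (ℓ + m) - (d1 - d2 : ℝ) * 10 ^ m + (d1 - d2 : ℝ)) / 9)
        * α ^ (-(n : ℤ)) * 10 ^ ℓ - 1| < 10 / (9 * α ^ n) :=
  key_estimate_three_general n ℓ m d1 d2 hn hd1 hd1' heq
end

section
/- For every n with 0 ≤ n ≤ 1000, the Lucas number L_n is not of the form (1/9)(d1·10^{2ℓ+m} − (d1−d2)·10^{ℓ+m} + (d1−d2)·10^ℓ − d1) for any d1 ∈ {1,…,9}, d2 ∈ {0,…,9} with d1 ≠ d2 and any ℓ, m ≥ 1. -/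
def lucas : ℕ → ℕ
  | 0 => 2
  | 1 => 1
  | n + 2 => lucas (n + 1) + lucas n

section Aux

def forceN (n : ℕ) (f : ℕ → Bool) : Bool := Nat.rec (f 0) (fun m _ => f (m+1)) n

theorem forceN_eq (n : ℕ) (f : ℕ → Bool) : forceN n f = f n := by
  cases n <;> rfl

def rowB (L R A B : ℕ) : Bool :=
  forceN ((L - R) / (B - A)) fun c =>
    !((L + c * A == R + c * B) && Nat.ble c 9)

def loopB (N9 d1 Ps : ℕ) : ℕ → ℕ → ℕ → Bool
  | 0, _, _ => true
  | k+1, A, B =>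
      rowB (N9 + d1 * B + d1) (d1 * Ps + d1 * A) A B &&
      forceN (A * 10) fun A' => forceN (B / 10) fun B' => loopB N9 d1 Ps k A' B'

def checkB (N s : ℕ) : Bool :=
  forceN (N % 10) fun d1 =>
  forceN (10 ^ (s - 1)) fun P1 =>
  Nat.ble P1 N && Nat.blt N (P1 * 10) && !(d1 == 0) &&
  (!(N / P1 == d1) || forceN (9 * N) fun N9 => loopB N9 d1 (P1 * 10) ((s-1)/2) 10 P1)

def sOfB : ℕ → ℕ → ℕ
  | 0, _ => 0
  | f+1, N => if N < 10 then 1 else sOfB f (N / 10) + 1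

def sOfA : ℕ → ℕ → ℕ
  | 0, _ => 0
  | f+1, N => if N < 10000000000000000 then sOfB 16 N else sOfA f (N / 10000000000000000) + 16

def sOf (N : ℕ) : ℕ := sOfA 30 N

def bigLoop : ℕ → ℕ → ℕ → Bool
  | 0, _, _ => true
  | k+1, a, b => (forceN (sOf a) fun s => checkB a s) && forceN (a + b) fun c => bigLoop k b c

set_option maxRecDepth 1000000 in
theorem bigRun : bigLoop 1001 2 1 = true := by decide

theorem rowB_sound {L R A B : ℕ} (hAB : A < B) (h : rowB L R A B = true) :
    ∀ b ≤ 9, L + b * A ≠ R + b * B := by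
  intro b hb heq
  have hD : 0 < B - A := by omega
  have h1 : b * B = b * A + b * (B - A) := by
    have hAB' : A + (B - A) = B := by omega
    calc b * B = b * (A + (B - A)) := by rw [hAB']
    _ = b * A + b * (B - A) := by ring
  have hLR : L = R + b * (B - A) := by linarith
  have hW : L - R = b * (B - A) := by rw [hLR, Nat.add_sub_cancel_left]
  have hc : (L - R) / (B - A) = b := by
    rw [hW, Nat.mul_div_cancel b hD]
  have hbeq : (L + b * A == R + b * B) = true := beq_iff_eq.mpr heq
  have hble : Nat.ble b 9 = true := Nat.ble_eq.mpr hb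
  rw [rowB, forceN_eq, hc, hbeq, hble] at h
  simp at h

theorem loopB_sound (N9 d1 Ps : ℕ) :
    ∀ k x y, x + 2*k ≤ y + 1 → loopB N9 d1 Ps k (10^x) (10^y) = true →
    ∀ j, j < k → ∀ b, b ≤ 9 →
      N9 + d1 * 10^(y-j) + d1 + b * 10^(x+j) ≠ d1 * Ps + d1 * 10^(x+j) + b * 10^(y-j) := by
  intro k
  induction k with
  | zero => intro x y _ _ j hj; omega
  | succ k ih =>
    intro x y hxy h j hj b hb
    have h' : rowB (N9 + d1*10^y + d1) (d1*Ps + d1*10^x) (10^x) (10^y) = true ∧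
        loopB N9 d1 Ps k (10^x*10) (10^y/10) = true := by
      simpa only [loopB, forceN_eq, Bool.and_eq_true] using h
    cases j with
    | zero =>
      have hxy' : (10:ℕ)^x < 10^y := Nat.pow_lt_pow_right (by norm_num) (by omega)
      have := rowB_sound hxy' h'.1 b hb
      simpa using this
    | succ j =>
      have e1 : (10:ℕ)^x*10 = 10^(x+1) := (pow_succ 10 x).symm
      have e2 : (10:ℕ)^y/10 = 10^(y-1) := by
        have hy : (10:ℕ)^y = 10^(y-1)*10 := by
          rw [← pow_succ]; congr 1; omega
        rw [hy, Nat.mul_div_cancel _ (by norm_num)]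
      have hrec := ih (x+1) (y-1) (by omega)
        (by rw [← e1, ← e2]; exact h'.2) j (by omega) b hb
      have r1 : y - (j+1) = (y-1) - j := by omega
      have r2 : x + (j+1) = (x+1) + j := by omega
      rw [r1, r2]; exact hrec

theorem checkB_sound {N s : ℕ} (h : checkB N s = true) :
    10^(s-1) ≤ N ∧ N < 10^(s-1) * 10 ∧ N % 10 ≠ 0 ∧
    (N / 10^(s-1) ≠ N % 10 ∨
      ∀ ℓ b, 1 ≤ ℓ → 2*ℓ ≤ s - 1 → b ≤ 9 →
        9*N + (N%10) * 10^(s-1-ℓ+1) + (N%10) + b * 10^ℓ ≠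
          (N%10) * (10^(s-1)*10) + (N%10) * 10^ℓ + b * 10^(s-1-ℓ+1)) := by
  rw [checkB, forceN_eq, forceN_eq] at h
  simp only [Bool.and_eq_true, Bool.or_eq_true, Nat.ble_eq, Nat.blt_eq,
    Bool.not_eq_true', beq_eq_false_iff_ne, ne_eq, forceN_eq] at h
  obtain ⟨⟨⟨h1, h2⟩, h3⟩, h4⟩ := h
  refine ⟨h1, h2, h3, ?_⟩
  rcases h4 with h4 | h4
  · exact Or.inl h4
  · right
    intro ℓ b hℓ h2ℓ hb
    have hloop : loopB (9*N) (N%10) (10^(s-1)*10) ((s-1)/2) (10^1) (10^(s-1)) = true := by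
      rw [pow_one]; exact h4
    have := loopB_sound (9*N) (N%10) (10^(s-1)*10) ((s-1)/2) 1 (s-1)
      (by omega) hloop (ℓ-1) (by omega) b hb
    have r1 : (s-1) - (ℓ-1) = s-1-ℓ+1 := by omega
    have r2 : 1 + (ℓ-1) = ℓ := by omega
    rw [r1, r2] at this
    exact this

def lpr : ℕ → ℕ × ℕ → ℕ × ℕ
  | 0, p => p
  | k+1, p => lpr k (p.2, p.1 + p.2)

theorem lpr_lucas : ∀ n m : ℕ, lpr n (lucas m, lucas (m+1)) = (lucas (n+m), lucas (n+m+1)) := by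
  intro n
  induction n with
  | zero => intro m; simp [lpr]
  | succ n ih =>
    intro m
    have step : lpr (n+1) (lucas m, lucas (m+1)) = lpr n (lucas (m+1), lucas m + lucas (m+1)) := by
      simp [lpr]
    rw [step, add_comm (lucas m) (lucas (m+1)), show lucas (m+1) + lucas m = lucas (m+2) from rfl,
      ih (m+1)]
    congr 1 <;> congr 1 <;> omega

theorem lucas_eq (n : ℕ) : lucas n = (lpr n (2, 1)).1 := by
  have h := lpr_lucas n 0
  have h0 : (lucas 0, lucas 1) = (2, 1) := rfl
  rw [h0] at h
  rw [h]
  simp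

theorem bigLoop_sound : ∀ k a b, bigLoop k a b = true →
    ∀ j, j < k → checkB (lpr j (a, b)).1 (sOf (lpr j (a, b)).1) = true := by
  intro k
  induction k with
  | zero => intro a b _ j hj; omega
  | succ k ih =>
    intro a b h j hj
    have h' : checkB a (sOf a) = true ∧ bigLoop k b (a+b) = true := by
      simpa only [bigLoop, forceN_eq, Bool.and_eq_true] using h
    cases j with
    | zero => simpa [lpr] using h'.1
    | succ j =>
      have step : lpr (j+1) (a, b) = lpr j (b, a+b) := by simp [lpr]
      rw [step]
      exact ih b (a+b) h'.2 j (by omega)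

theorem window_unique {N e f : ℕ} (h1 : 10^e ≤ N) (h2 : N < 10^(e+1))
    (h3 : 10^f ≤ N) (h4 : N < 10^(f+1)) : e = f := by
  by_contra hne
  rcases Nat.lt_or_ge e f with hlt | hge
  · have : (10:ℕ)^(e+1) ≤ 10^f := Nat.pow_le_pow_right (by norm_num) (by omega)
    omega
  · have hlt : f < e := by omega
    have : (10:ℕ)^(f+1) ≤ 10^e := Nat.pow_le_pow_right (by norm_num) (by omega)
    omega

end Aux

theorem low_bound {N a b P Q : ℕ}
    (key : 9*N + a*(100*(P*Q)) + b*(10*P) + a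
      = a*(1000*(P*(P*Q))) + b*(100*(P*Q)) + a*(10*P))
    (g1 : a*(P*Q) ≤ a*(P*(P*Q))) (g2 : b*P ≤ b*(P*Q)) (g3 : a ≤ a*P) :
    9*(a*(100*(P*(P*Q)))) ≤ 9*N := by
  nlinarith [key, g1, g2, g3]

theorem high_bound {N a b P Q : ℕ}
    (ha1 : 1 ≤ a) (ha9 : a ≤ 9) (hb9 : b ≤ 9)
    (hPPQ : P ≤ P*Q) (hRQ : P*Q ≤ P*(P*Q))
    (key : 9*N + a*(100*(P*Q)) + b*(10*P) + a
      = a*(1000*(P*(P*Q))) + b*(100*(P*Q)) + a*(10*P)) :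
    9*N < 9*((a+1)*(100*(P*(P*Q)))) := by
  have h91 : (9-a)*(P*Q) ≤ (9-a)*(P*(P*Q)) := Nat.mul_le_mul_left _ hRQ
  have h92 : (9-a)*(P*Q) + a*(P*Q) = 9*(P*Q) := by
    rw [← Nat.add_mul, Nat.sub_add_cancel ha9]
  have h93 : (9-a)*(P*(P*Q)) + a*(P*(P*Q)) = 9*(P*(P*Q)) := by
    rw [← Nat.add_mul, Nat.sub_add_cancel ha9]
  have h94 : b*(P*Q) + (9-b)*(P*Q) = 9*(P*Q) := by
    rw [← Nat.add_mul, Nat.add_sub_cancel' hb9]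
  have H1s : a*(P*(P*Q)) + b*(P*Q) + (9-b)*(P*Q) ≤ 9*(P*(P*Q)) + a*(P*Q) := by
    linarith [h91, h92, h93, h94]
  rcases le_or_gt a b with hba | hba
  · have hab2 : a*P ≤ b*P := Nat.mul_le_mul_right P hba
    nlinarith [key, H1s, hab2, ha1]
  · have f0 : a*P = b*P + (a-b)*P := by
      rw [← Nat.add_mul, Nat.add_sub_cancel' (le_of_lt hba)]
    have f1 : (a-b)*P ≤ (9-b)*P := Nat.mul_le_mul_right P (by omega)
    have f2 : (9-b)*P ≤ (9-b)*(P*Q) := Nat.mul_le_mul_left _ hPPQ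
    nlinarith [key, H1s, f0, f1, f2, ha1]

set_option maxHeartbeats 1000000 in
/-- For `0 ≤ n ≤ 1000`, the Lucas number `L n` is not a palindromic
concatenation of two distinct repdigits. -/
theorem low_range_check (n : ℕ) (hn : n ≤ 1000) :
    ¬ ∃ (ℓ m : ℕ) (d1 d2 : ℤ), 1 ≤ ℓ ∧ 1 ≤ m ∧
      1 ≤ d1 ∧ d1 ≤ 9 ∧ 0 ≤ d2 ∧ d2 ≤ 9 ∧ d1 ≠ d2 ∧
      9 * (lucas n : ℤ) =
        d1 * 10 ^ (2 * ℓ + m) - (d1 - d2) * 10 ^ (ℓ + m)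
          + (d1 - d2) * 10 ^ ℓ - d1 := by
  rintro ⟨ℓ, m, d1, d2, hℓ, hm, hd11, hd19, hd20, hd29, hne, heq⟩
  lift d1 to ℕ using (by linarith) with a
  lift d2 to ℕ using hd20 with b
  set N := lucas n with hN
  have ha1 : 1 ≤ a := by exact_mod_cast hd11
  have ha9 : a ≤ 9 := by exact_mod_cast hd19
  have hb9 : b ≤ 9 := by exact_mod_cast hd29
  have hab : a ≠ b := fun h => hne (by rw [h])
  have key : 9*N + a * 10^(ℓ+m) + b * 10^ℓ + a
      = a * 10^(2*ℓ+m) + b * 10^(ℓ+m) + a * 10^ℓ := by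
    have hz : ((9*N + a * 10^(ℓ+m) + b * 10^ℓ + a : ℕ) : ℤ)
        = ((a * 10^(2*ℓ+m) + b * 10^(ℓ+m) + a * 10^ℓ : ℕ) : ℤ) := by
      push_cast
      linarith [heq]
    exact_mod_cast hz
  obtain ⟨ℓ', rfl⟩ : ∃ k, ℓ = k + 1 := ⟨ℓ-1, by omega⟩
  obtain ⟨m', rfl⟩ : ∃ k, m = k + 1 := ⟨m-1, by omega⟩
  have hP1 : 1 ≤ (10:ℕ)^ℓ' := Nat.one_le_pow _ _ (by norm_num)
  have hQ1 : 1 ≤ (10:ℕ)^m' := Nat.one_le_pow _ _ (by norm_num)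
  set P := (10:ℕ)^ℓ' with hP
  set Q := (10:ℕ)^m' with hQ
  have e1 : (10:ℕ)^(ℓ'+1) = 10*P := by rw [hP, pow_succ]; ring
  have e2 : (10:ℕ)^((ℓ'+1)+(m'+1)) = 100*(P*Q) := by
    rw [hP, hQ, show (ℓ'+1)+(m'+1) = ℓ'+(m'+2) from by omega, pow_add, pow_add]
    ring
  have e3 : (10:ℕ)^(2*(ℓ'+1)+(m'+1)) = 1000*(P*(P*Q)) := by
    rw [hP, hQ, show 2*(ℓ'+1)+(m'+1) = ℓ'+(ℓ'+(m'+3)) from by omega,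
      pow_add, pow_add, pow_add]
    ring
  have e4 : (10:ℕ)^(2*ℓ'+m'+2) = 100*(P*(P*Q)) := by
    rw [hP, hQ, show 2*ℓ'+m'+2 = ℓ'+(ℓ'+(m'+2)) from by omega,
      pow_add, pow_add, pow_add]
    ring
  rw [e1, e2, e3] at key
  -- abbreviations and basic product facts
  have hRQ : P*Q ≤ P*(P*Q) := Nat.le_mul_of_pos_left (P*Q) (by positivity)
  have hPPQ : P ≤ P*Q := Nat.le_mul_of_pos_right P (by positivity)
  -- leading digit bounds
  have g1 : a*(P*Q) ≤ a*(P*(P*Q)) := Nat.mul_le_mul_left a hRQ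
  have g2 : b*P ≤ b*(P*Q) := Nat.mul_le_mul_left b hPPQ
  have g3 : a ≤ a*P := Nat.le_mul_of_pos_right a (by positivity)
  have low9 : 9*(a*(100*(P*(P*Q)))) ≤ 9*N := low_bound key g1 g2 g3
  have high9 : 9*N < 9*((a+1)*(100*(P*(P*Q)))) := high_bound ha1 ha9 hb9 hPPQ hRQ key
  have lo : a*(100*(P*(P*Q))) ≤ N := Nat.le_of_mul_le_mul_left low9 (by norm_num)
  have hi : N < (a+1)*(100*(P*(P*Q))) := Nat.lt_of_mul_lt_mul_left high9
  have hdiv : N / (100*(P*(P*Q))) = a := Nat.div_eq_of_lt_le lo hi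
  -- plain window bounds
  have lowW : 10^(2*ℓ'+m'+2) ≤ N := by
    rw [e4]
    have h10 : 1*(100*(P*(P*Q))) ≤ a*(100*(P*(P*Q))) := Nat.mul_le_mul_right _ ha1
    linarith [lo, h10]
  have highW : N < 10^(2*ℓ'+m'+2+1) := by
    have e5 : (10:ℕ)^(2*ℓ'+m'+2+1) = 1000*(P*(P*Q)) := by
      rw [show 2*ℓ'+m'+2+1 = 2*(ℓ'+1)+(m'+1) from by omega]; exact e3
    rw [e5]
    have h11 : (a+1)*(100*(P*(P*Q))) ≤ 10*(100*(P*(P*Q))) := Nat.mul_le_mul_right _ (by omega)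
    linarith [hi, h11]
  -- trailing digit
  have key2 : 9*N + 100*(a*(P*Q)) + 10*(b*P) + a
      = 1000*(a*(P*(P*Q))) + 100*(b*(P*Q)) + 10*(a*P) := by linarith [key]
  have hamod : a = N % 10 := by
    generalize a*(P*Q) = u at key2
    generalize b*P = v at key2
    generalize a*(P*(P*Q)) = w at key2
    generalize b*(P*Q) = x at key2
    generalize a*P = y at key2
    omega
  -- computational certificate
  have hrun : checkB N (sOf N) = true := by
    have hb := bigLoop_sound 1001 2 1 bigRun n (by omega)
    rw [hN, lucas_eq n]
    exact hb
  obtain ⟨w1, w2, w3, w4⟩ := checkB_sound hrun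
  have he : sOf N - 1 = 2*ℓ'+m'+2 := by
    refine window_unique w1 ?_ lowW highW
    rw [pow_succ]; exact w2
  rcases w4 with hbad | hrow
  · apply hbad
    rw [he, e4, hdiv]; exact hamod
  · have happ := hrow (ℓ'+1) b (by omega) (by omega) hb9
    have r1 : sOf N - 1 - (ℓ'+1) + 1 = (ℓ'+1)+(m'+1) := by omega
    have r2 : (10:ℕ)^(sOf N - 1) * 10 = 10^(2*(ℓ'+1)+(m'+1)) := by
      rw [← pow_succ, show sOf N - 1 + 1 = 2*(ℓ'+1)+(m'+1) from by omega]
    rw [r1, r2, ← hamod, e1, e2, e3] at happ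
    apply happ
    linarith [key]
end

section
/- Let τ ≠ 0, and let A > 0, B > 1, μ be reals. Let M > 1 be a positive integer and p/q a convergent of the continued fraction of τ with q > 6M. Set ε := ‖μq‖ − M‖τq‖, where ‖r‖ denotes the distance from r to the nearest integer. If ε > 0, then there is no solution of 0 < |mτ − n + μ| < A·B^{−k} in positive integers m, n, k with k ≥ log(Aq/ε)/log B and m ≤ M. -/
/-- Distance from a real number to the nearest integer. -/
noncomputable def distNearestInt (r : ℝ) : ℝ := |r - round r|

/-- Dujella–Pethő reduction lemma. -/
theorem dujella_petho (τ μ A B : ℝ) (M : ℕ) (p : ℤ) (q : ℕ)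
    (hτ : τ ≠ 0) (hA : 0 < A) (hB : 1 < B) (hM : 1 < M) (hq : 0 < q)
    (hconv : ∃ i : ℕ, (GenContFract.of τ).convs i = (p : ℝ) / q)
    (hq6M : 6 * M < q)
    (hε : 0 < distNearestInt (μ * q) - M * distNearestInt (τ * q)) :
    ¬ ∃ (m n k : ℕ), 0 < m ∧ 0 < n ∧ 0 < k ∧ m ≤ M ∧
      Real.log (A * q / (distNearestInt (μ * q) - M * distNearestInt (τ * q)))
          / Real.log B ≤ k ∧
      0 < |m * τ - n + μ| ∧ |m * τ - n + μ| < A * B ^ (-(k : ℤ)) := by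
  rintro ⟨m, n, k, hm, hn, hk, hmM, hklog, habs_pos, habs_lt⟩
  set dμ := distNearestInt (μ * q) with hdμdef
  set dτ := distNearestInt (τ * q) with hdτdef
  set ε := dμ - M * dτ with hεdef
  have hdμhalf : dμ ≤ 1 / 2 := abs_sub_round _
  have hdτ0 : 0 ≤ dτ := abs_nonneg _
  have hqR : (0 : ℝ) < q := by exact_mod_cast hq
  have hB0 : (0 : ℝ) < B := lt_trans one_pos hB
  have hmMR : (m : ℝ) ≤ M := by exact_mod_cast hmM
  -- lower bound: ε ≤ q * |m τ - n + μ|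
  have key : ε ≤ q * |(m : ℝ) * τ - n + μ| := by
    set r : ℤ := round (τ * (q : ℝ)) with hr
    set s : ℤ := round (μ * (q : ℝ)) with hs
    have hdτ : dτ = |τ * q - r| := rfl
    have hdμ : dμ = |μ * q - s| := rfl
    have hrw : (q : ℝ) * |(m : ℝ) * τ - n + μ|
        = |((m * r - n * q + s : ℤ) : ℝ) + ((m : ℝ) * (τ * q - r) + (μ * q - s))| := by
      have h := (abs_mul (q : ℝ) ((m : ℝ) * τ - n + μ)).symm
      rw [abs_of_pos hqR] at h
      rw [h]
      congr 1
      push_cast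
      ring
    rw [hrw]
    have hmd : (m : ℝ) * |τ * q - r| ≤ M * dτ := by
      rw [hdτ]
      exact mul_le_mul_of_nonneg_right hmMR (abs_nonneg _)
    by_cases hJ : (m * r - n * q + s : ℤ) = 0
    · rw [hJ]
      push_cast
      have h1 : |μ * q - s| - |(m : ℝ) * (τ * q - r)|
          ≤ |(0 : ℝ) + ((m : ℝ) * (τ * q - r) + (μ * q - s))| := by
        have := abs_sub_abs_le_abs_sub (μ * q - s) (-((m : ℝ) * (τ * q - r)))
        simp only [abs_neg, sub_neg_eq_add] at this
        calc |μ * q - s| - |(m : ℝ) * (τ * q - r)|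
            ≤ |μ * q - s + (m : ℝ) * (τ * q - r)| := this
          _ = |(0 : ℝ) + ((m : ℝ) * (τ * q - r) + (μ * q - s))| := by ring_nf
      refine le_trans ?_ h1
      rw [abs_mul, abs_of_nonneg (by positivity : (0:ℝ) ≤ (m:ℝ))]
      have : (m : ℝ) * |τ * q - r| ≤ (M : ℝ) * dτ := hmd
      rw [hεdef, hdμ]
      linarith
    · have hJ1 : (1 : ℝ) ≤ |((m * r - n * q + s : ℤ) : ℝ)| := by
        rw [← Int.cast_abs]
        exact_mod_cast Int.one_le_abs hJ
      have h2 : |((m * r - n * q + s : ℤ) : ℝ)|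
          ≤ |((m * r - n * q + s : ℤ) : ℝ) + ((m : ℝ) * (τ * q - r) + (μ * q - s))|
            + |(m : ℝ) * (τ * q - r) + (μ * q - s)| := by
        calc |((m * r - n * q + s : ℤ) : ℝ)|
            = |(((m * r - n * q + s : ℤ) : ℝ) + ((m : ℝ) * (τ * q - r) + (μ * q - s)))
              + (-((m : ℝ) * (τ * q - r) + (μ * q - s)))| := by congr 1; ring
          _ ≤ |((m * r - n * q + s : ℤ) : ℝ) + ((m : ℝ) * (τ * q - r) + (μ * q - s))|
              + |-((m : ℝ) * (τ * q - r) + (μ * q - s))| := abs_add_le _ _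
          _ = _ := by rw [abs_neg]
      have h3 : |(m : ℝ) * (τ * q - r) + (μ * q - s)| ≤ M * dτ + dμ := by
        refine le_trans (abs_add_le _ _) ?_
        rw [abs_mul, abs_of_nonneg (by positivity : (0:ℝ) ≤ (m:ℝ)), hdμ]
        linarith
      have hMdτ : (0:ℝ) ≤ M * dτ := by positivity
      rw [hεdef]
      linarith
  -- upper bound: A * B ^ (-k) ≤ ε / q
  have hεA : 0 < A * q / ε := by positivity
  have hlogB : 0 < Real.log B := Real.log_pos hB
  have hklog' : Real.log (A * q / ε) ≤ k * Real.log B := by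
    rw [div_le_iff₀ hlogB] at hklog
    linarith
  have hBk : A * q / ε ≤ B ^ k := by
    calc A * q / ε = Real.exp (Real.log (A * q / ε)) := (Real.exp_log hεA).symm
      _ ≤ Real.exp (k * Real.log B) := Real.exp_le_exp.2 hklog'
      _ = B ^ k := by
          rw [mul_comm, Real.exp_mul, Real.exp_log hB0, Real.rpow_natCast]
  have hBkpos : (0 : ℝ) < B ^ k := by positivity
  have hupper : A * B ^ (-(k : ℤ)) ≤ ε / q := by
    rw [zpow_neg, zpow_natCast, ← div_eq_mul_inv, div_le_div_iff₀ hBkpos hqR]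
    rw [div_le_iff₀ hε] at hBk
    linarith
  have : (q : ℝ) * |(m : ℝ) * τ - n + μ| < ε := by
    calc (q : ℝ) * |(m : ℝ) * τ - n + μ| < q * (A * B ^ (-(k : ℤ))) :=
          mul_lt_mul_of_pos_left habs_lt hqR
      _ ≤ q * (ε / q) := mul_le_mul_of_nonneg_left hupper (le_of_lt hqR)
      _ = ε := by field_simp
  linarith
end
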